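/- arXiv:2501.03350 — 6 statements merged into one kernel-verified Lean document; each statement's English description precedes it below -/
import Mathlib

section
/- Let C be a 2-copula and let μ_C be the probability measure on [0,1]² induced by C. Then C is I(-1,-1) if, and only if, C(u,v)·C(u',v') ≥ C(u,v')·C(u',v) for all u, v, u', v' in [0,1] with u ≤ u' and v ≤ v'. -/
/-!
Extending `C` by the uniform distribution function `F(x) = max 0 (min x 1)` gives the joint
distribution function `H(x, y) = C(F x, F y)` of `μ`; since a copula is Lipschitz, `μ` also gives
the open lower orthant `(-∞, a) × (-∞, b)` the mass `H(a, b)`. For the direction `(-1, -1)` the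
events in the definition of I(α) are exactly such orthants, so I(-1,-1) becomes the inequality
`H(s ∧ s', t ∧ t') H(s'', t'') ≤ H(s ∧ s'', t ∧ t'') H(s', t')` for `(s'', t'') ≤ (s', t')`.
This follows from the TP2 inequality of `H` put in lattice form,
`H(x, y) H(x', y') ≤ H(x ∧ x', y ∧ y') H(x ∨ x', y ∨ y')`, and the monotonicity of `H`;
conversely, the TP2 inequality of `C` is the special case `s = u`, `t = t' = v'`, `s' = s'' = u'`,
`t'' = v`.
-/

open MeasureTheory Set

/-- A (bivariate) 2-copula. -/
structure IsCopula2 (C : ℝ → ℝ → ℝ) : Prop where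
  grounded_left : ∀ v ∈ Icc (0:ℝ) 1, C 0 v = 0
  grounded_right : ∀ u ∈ Icc (0:ℝ) 1, C u 0 = 0
  margin_left : ∀ u ∈ Icc (0:ℝ) 1, C u 1 = u
  margin_right : ∀ v ∈ Icc (0:ℝ) 1, C 1 v = v
  twoIncreasing : ∀ u u' v v' : ℝ, u ∈ Icc (0:ℝ) 1 → u' ∈ Icc (0:ℝ) 1 →
    v ∈ Icc (0:ℝ) 1 → v' ∈ Icc (0:ℝ) 1 → u ≤ u' → v ≤ v' →
    0 ≤ C u' v' - C u' v - C u v' + C u v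

/-- A joint law `μ` on `ℝ × ℝ` is increasing according to the direction `(a₁, a₂)`
(the I(α) property): the conditional probability
`P[a₁U > x₁, a₂V > x₂ | a₁U > x₁', a₂V > x₂']` is nondecreasing in `(x₁', x₂')`,
expressed equivalently via the cross-product inequality. -/
def IsIncDir2 (μ : Measure (ℝ × ℝ)) (a₁ a₂ : ℝ) : Prop :=
  ∀ x₁ x₂ x₁' x₂' x₁'' x₂'' : ℝ, x₁' ≤ x₁'' → x₂' ≤ x₂'' →
    μ {p : ℝ × ℝ | (a₁ * p.1 > x₁ ∧ a₂ * p.2 > x₂) ∧ (a₁ * p.1 > x₁' ∧ a₂ * p.2 > x₂')} *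
      μ {p : ℝ × ℝ | a₁ * p.1 > x₁'' ∧ a₂ * p.2 > x₂''} ≤
    μ {p : ℝ × ℝ | (a₁ * p.1 > x₁ ∧ a₂ * p.2 > x₂) ∧ (a₁ * p.1 > x₁'' ∧ a₂ * p.2 > x₂'')} *
      μ {p : ℝ × ℝ | a₁ * p.1 > x₁' ∧ a₂ * p.2 > x₂'}

open Filter Topology

section TotallyPositive

variable {α β : Type*} [LinearOrder α] [LinearOrder β] {G : α → β → ℝ}

theorem mul_le_mul_min_max_of_tp2
    (htp2 : ∀ a a' b b', a ≤ a' → b ≤ b' → G a b' * G a' b ≤ G a b * G a' b')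
    (x x' : α) (y y' : β) :
    G x y * G x' y' ≤ G (min x x') (min y y') * G (max x x') (max y y') := by
  rcases le_total x x' with hx | hx <;> rcases le_total y y' with hy | hy
  · rw [min_eq_left hx, max_eq_right hx, min_eq_left hy, max_eq_right hy]
  · rw [min_eq_left hx, max_eq_right hx, min_eq_right hy, max_eq_left hy]
    exact htp2 x x' y' y hx hy
  · rw [min_eq_right hx, max_eq_left hx, min_eq_left hy, max_eq_right hy]
    linarith [htp2 x' x y y' hx hy]
  · rw [min_eq_right hx, max_eq_left hx, min_eq_right hy, max_eq_left hy, mul_comm]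

theorem mul_le_mul_of_tp2 (hG : ∀ a b, 0 ≤ G a b) (hmono : Monotone (Function.uncurry G))
    (htp2 : ∀ a a' b b', a ≤ a' → b ≤ b' → G a b' * G a' b ≤ G a b * G a' b')
    {s s' s'' : α} {t t' t'' : β} (hs : s'' ≤ s') (ht : t'' ≤ t') :
    G (min s s') (min t t') * G s'' t'' ≤ G (min s s'') (min t t'') * G s' t' := by
  have hmax : G (max (min s s') s'') (max (min t t') t'') ≤ G s' t' :=
    hmono (a := (_, _)) (b := (_, _))
      ⟨max_le (min_le_right _ _) hs, max_le (min_le_right _ _) ht⟩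
  calc G (min s s') (min t t') * G s'' t''
      ≤ G (min (min s s') s'') (min (min t t') t'') *
          G (max (min s s') s'') (max (min t t') t'') :=
        mul_le_mul_min_max_of_tp2 htp2 _ _ _ _
    _ ≤ G (min s s'') (min t t'') * G s' t' := by
        rw [min_assoc, min_eq_right hs, min_assoc, min_eq_right ht]
        exact mul_le_mul_of_nonneg_left hmax (hG _ _)

end TotallyPositive

namespace IsCopula2

variable {C : ℝ → ℝ → ℝ} {u u' v v' : ℝ}

theorem mono (hC : IsCopula2 C) (hu' : u' ∈ Icc (0:ℝ) 1) (hu : u ∈ Icc (0:ℝ) 1)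
    (hv' : v' ∈ Icc (0:ℝ) 1) (hv : v ∈ Icc (0:ℝ) 1) (huu : u' ≤ u) (hvv : v' ≤ v) :
    C u' v' ≤ C u v := by
  have h₁ := hC.twoIncreasing u' u 0 v' hu' hu (left_mem_Icc.2 zero_le_one) hv' huu hv'.1
  have h₂ := hC.twoIncreasing 0 u v' v (left_mem_Icc.2 zero_le_one) hu hv' hv hu.1 hvv
  linarith [hC.grounded_right u hu, hC.grounded_right u' hu', hC.grounded_left v hv,
    hC.grounded_left v' hv']

theorem nonneg (hC : IsCopula2 C) (hu : u ∈ Icc (0:ℝ) 1) (hv : v ∈ Icc (0:ℝ) 1) : 0 ≤ C u v := by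
  have h₀ : (0:ℝ) ∈ Icc (0:ℝ) 1 := left_mem_Icc.2 zero_le_one
  simpa [hC.grounded_left 0 h₀] using hC.mono h₀ hu h₀ hv hu.1 hv.1

theorem sub_le (hC : IsCopula2 C) (hu' : u' ∈ Icc (0:ℝ) 1) (hu : u ∈ Icc (0:ℝ) 1)
    (hv' : v' ∈ Icc (0:ℝ) 1) (hv : v ∈ Icc (0:ℝ) 1) (huu : u' ≤ u) (hvv : v' ≤ v) :
    C u v - C u' v' ≤ (u - u') + (v - v') := by
  have h₁ := hC.twoIncreasing u' u v 1 hu' hu hv (right_mem_Icc.2 zero_le_one) huu hv.2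
  have h₂ := hC.twoIncreasing u' 1 v' v hu' (right_mem_Icc.2 zero_le_one) hv' hv hu'.2 hvv
  linarith [hC.margin_left u hu, hC.margin_left u' hu', hC.margin_right v hv,
    hC.margin_right v' hv']

end IsCopula2

noncomputable def uniformCdf (x : ℝ) : ℝ := max 0 (min x 1)

theorem uniformCdf_mem (x : ℝ) : uniformCdf x ∈ Icc (0:ℝ) 1 :=
  ⟨le_max_left _ _, max_le zero_le_one (min_le_right _ _)⟩

theorem uniformCdf_of_mem {x : ℝ} (hx : x ∈ Icc (0:ℝ) 1) : uniformCdf x = x := by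
  rw [uniformCdf, min_eq_left hx.2, max_eq_right hx.1]

theorem uniformCdf_of_nonpos {x : ℝ} (hx : x ≤ 0) : uniformCdf x = 0 :=
  max_eq_left ((min_le_left _ _).trans hx)

theorem uniformCdf_pos {x : ℝ} (hx : 0 < x) : 0 < uniformCdf x :=
  lt_max_of_lt_right (lt_min hx zero_lt_one)

theorem uniformCdf_le {x : ℝ} (hx : 0 ≤ x) : uniformCdf x ≤ x :=
  max_le hx (min_le_left _ _)

theorem le_uniformCdf {x y : ℝ} (hxy : x ≤ y) (hx : x ≤ 1) : x ≤ uniformCdf y :=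
  le_max_of_le_right (le_min hxy hx)

theorem monotone_uniformCdf : Monotone uniformCdf := fun _ _ h =>
  max_le_max le_rfl (min_le_min h le_rfl)

section CopulaMeasure

variable {C : ℝ → ℝ → ℝ} {μ : Measure (ℝ × ℝ)}

theorem measure_Iio_prod_Iio [IsProbabilityMeasure μ] (hC : IsCopula2 C)
    (hsupp : μ (Icc (0:ℝ) 1 ×ˢ Icc (0:ℝ) 1) = 1)
    (hμC : ∀ u ∈ Icc (0:ℝ) 1, ∀ v ∈ Icc (0:ℝ) 1,
      μ (Icc 0 u ×ˢ Icc 0 v) = ENNReal.ofReal (C u v))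
    (a b : ℝ) :
    μ (Iio a ×ˢ Iio b) = ENNReal.ofReal (C (uniformCdf a) (uniformCdf b)) := by
  have hKc : μ (Icc (0:ℝ) 1 ×ˢ Icc (0:ℝ) 1)ᶜ = 0 :=
    (prob_compl_eq_zero_iff (measurableSet_Icc.prod measurableSet_Icc)).2 hsupp
  rw [← measure_inter_conull hKc]
  set u := uniformCdf a
  set v := uniformCdf b
  have hu : u ∈ Icc (0:ℝ) 1 := uniformCdf_mem a
  have hv : v ∈ Icc (0:ℝ) 1 := uniformCdf_mem b
  refine le_antisymm ?_ ?_
  · calc μ ((Iio a ×ˢ Iio b) ∩ Icc 0 1 ×ˢ Icc 0 1) ≤ μ (Icc 0 u ×ˢ Icc 0 v) :=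
          measure_mono fun p ⟨⟨ha, hb⟩, ⟨h₁, h₁'⟩, ⟨h₂, h₂'⟩⟩ =>
            ⟨⟨h₁, le_uniformCdf ha.le h₁'⟩, ⟨h₂, le_uniformCdf hb.le h₂'⟩⟩
      _ = ENNReal.ofReal (C u v) := hμC u hu v hv
  rcases le_or_gt a 0 with ha | ha
  · rw [show u = 0 from uniformCdf_of_nonpos ha, hC.grounded_left v hv, ENNReal.ofReal_zero]
    exact zero_le
  rcases le_or_gt b 0 with hb | hb
  · rw [show v = 0 from uniformCdf_of_nonpos hb, hC.grounded_right u hu, ENNReal.ofReal_zero]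
    exact zero_le
  have hua : u ≤ a := uniformCdf_le ha.le
  have hvb : v ≤ b := uniformCdf_le hb.le
  -- approximate the orthant from inside by the closed squares `[0, u - t] × [0, v - t]`
  have hlim : Tendsto (fun t : ℝ => ENNReal.ofReal (C u v - 2 * t)) (𝓝[>] 0)
      (𝓝 (ENNReal.ofReal (C u v))) := by
    refine ((ENNReal.continuous_ofReal.comp (by fun_prop)).tendsto' 0 _ ?_).mono_left
      nhdsWithin_le_nhds
    simp
  refine le_of_tendsto hlim ?_
  filter_upwards [Ioo_mem_nhdsGT (lt_min (uniformCdf_pos ha) (uniformCdf_pos hb))]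
    with t ⟨ht, htuv⟩
  have htu : t ≤ u := htuv.le.trans (min_le_left _ _)
  have htv : t ≤ v := htuv.le.trans (min_le_right _ _)
  have hut : u - t ∈ Icc (0:ℝ) 1 := ⟨by linarith, by linarith [hu.2]⟩
  have hvt : v - t ∈ Icc (0:ℝ) 1 := ⟨by linarith, by linarith [hv.2]⟩
  calc ENNReal.ofReal (C u v - 2 * t) ≤ ENNReal.ofReal (C (u - t) (v - t)) := by
        refine ENNReal.ofReal_le_ofReal ?_
        linarith [hC.sub_le hut hu hvt hv (by linarith) (by linarith)]
    _ = μ (Icc 0 (u - t) ×ˢ Icc 0 (v - t)) := (hμC _ hut _ hvt).symm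
    _ ≤ μ ((Iio a ×ˢ Iio b) ∩ Icc 0 1 ×ˢ Icc 0 1) :=
        measure_mono fun p ⟨⟨h₁, h₁'⟩, ⟨h₂, h₂'⟩⟩ =>
          ⟨⟨mem_Iio.2 (by linarith), mem_Iio.2 (by linarith)⟩, ⟨h₁, h₁'.trans hut.2⟩, ⟨h₂, h₂'.trans hvt.2⟩⟩

end CopulaMeasure

theorem setOf_neg_one_mul_gt (x y : ℝ) :
    {p : ℝ × ℝ | -1 * p.1 > x ∧ -1 * p.2 > y} = Iio (-x) ×ˢ Iio (-y) := by
  ext p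
  simp only [mem_ofPred_eq, mem_prod, mem_Iio]
  constructor <;> rintro ⟨h₁, h₂⟩ <;> constructor <;> linarith

theorem setOf_neg_one_mul_gt_and (x y x' y' : ℝ) :
    {p : ℝ × ℝ | (-1 * p.1 > x ∧ -1 * p.2 > y) ∧ (-1 * p.1 > x' ∧ -1 * p.2 > y')} =
      Iio (min (-x) (-x')) ×ˢ Iio (min (-y) (-y')) := by
  rw [← Iio_inter_Iio, ← Iio_inter_Iio, ← prod_inter_prod, ← setOf_neg_one_mul_gt,
    ← setOf_neg_one_mul_gt]
  rfl

theorem isIncDir2_neg_one_iff {μ : Measure (ℝ × ℝ)} {H : ℝ → ℝ → ℝ} (hH : ∀ a b, 0 ≤ H a b)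
    (hμH : ∀ a b, μ (Iio a ×ˢ Iio b) = ENNReal.ofReal (H a b)) :
    IsIncDir2 μ (-1) (-1) ↔ ∀ x₁ x₂ x₁' x₂' x₁'' x₂'' : ℝ, x₁' ≤ x₁'' → x₂' ≤ x₂'' →
      H (min (-x₁) (-x₁')) (min (-x₂) (-x₂')) * H (-x₁'') (-x₂'') ≤
        H (min (-x₁) (-x₁'')) (min (-x₂) (-x₂'')) * H (-x₁') (-x₂') := by
  simp only [IsIncDir2, setOf_neg_one_mul_gt_and, setOf_neg_one_mul_gt, hμH,
    ← ENNReal.ofReal_mul (hH _ _), ENNReal.ofReal_le_ofReal_iff (mul_nonneg (hH _ _) (hH _ _))]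

theorem copula_I_neg1_neg1_iff (C : ℝ → ℝ → ℝ) (hC : IsCopula2 C)
    (μ : Measure (ℝ × ℝ)) [IsProbabilityMeasure μ]
    (hsupp : μ (Icc (0:ℝ) 1 ×ˢ Icc (0:ℝ) 1) = 1)
    (hμC : ∀ u ∈ Icc (0:ℝ) 1, ∀ v ∈ Icc (0:ℝ) 1,
      μ (Icc 0 u ×ˢ Icc 0 v) = ENNReal.ofReal (C u v)) :
    IsIncDir2 μ (-1) (-1) ↔
      ∀ u ∈ Icc (0:ℝ) 1, ∀ v ∈ Icc (0:ℝ) 1, ∀ u' ∈ Icc (0:ℝ) 1, ∀ v' ∈ Icc (0:ℝ) 1,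
        u ≤ u' → v ≤ v' →
        C u v * C u' v' ≥ C u v' * C u' v := by
  have hH : ∀ a b, 0 ≤ C (uniformCdf a) (uniformCdf b) := fun a b =>
    hC.nonneg (uniformCdf_mem a) (uniformCdf_mem b)
  rw [isIncDir2_neg_one_iff hH (measure_Iio_prod_Iio hC hsupp hμC)]
  constructor
  · intro h u hu v hv u' hu' v' hv' huu hvv
    simpa [min_eq_left huu, min_eq_right hvv, uniformCdf_of_mem, hu, hv, hu', hv']
      using h (-u) (-v') (-u') (-v') (-u') (-v) le_rfl (neg_le_neg hvv)
  · intro htp2 x₁ x₂ x₁' x₂' x₁'' x₂'' h₁ h₂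
    refine mul_le_mul_of_tp2 (G := fun a b => C (uniformCdf a) (uniformCdf b)) hH ?_ ?_
      (neg_le_neg h₁) (neg_le_neg h₂)
    · exact fun p q hpq => hC.mono (uniformCdf_mem _) (uniformCdf_mem _) (uniformCdf_mem _)
        (uniformCdf_mem _) (monotone_uniformCdf hpq.1) (monotone_uniformCdf hpq.2)
    · exact fun a a' b b' ha hb => htp2 _ (uniformCdf_mem a) _ (uniformCdf_mem b) _
        (uniformCdf_mem a') _ (uniformCdf_mem b') (monotone_uniformCdf ha)
        (monotone_uniformCdf hb)
end

section
/- Let C be a 2-copula with survival copula Ĉ(u,v) = u + v - 1 + C(1-u,1-v), and let μ_C be the probability measure on [0,1]² induced by C. Then C is I(1,1) if, and only if, Ĉ(u,v)·Ĉ(u',v') ≥ Ĉ(u,v')·Ĉ(u',v) for all u, v, u', v' in [0,1] with u ≤ u' and v ≤ v'. -/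
open MeasureTheory Set

/-! The survival function `S x y = μ(U > x, V > y)` equals `Ĉ(1 - x, 1 - y)` once `x, y` are
clamped to `[0, 1]`, because `μ_C` puts no mass on the edges `u = 0` and `v = 0` of the square.
So the rectangle inequality for `Ĉ` says that `S` is TP2. Since `{U > x} ∩ {U > x'} = {U > x ⊔ x'}`,
I(1,1) reads `S(x ⊔ x', y ⊔ y') S(x'', y'') ≤ S(x ⊔ x'', y ⊔ y'') S(x', y')` for
`(x', y') ≤ (x'', y'')`. For an antitone `S ≥ 0` this follows from the lattice form
`S b * S c ≤ S (b ⊓ c) * S (b ⊔ c)` of TP2 with `b = (x ⊔ x', y ⊔ y')`, `c = (x'', y'')`, because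
`b ⊔ c = (x ⊔ x'', y ⊔ y'')` and `b ⊓ c ≥ (x', y')`; conversely it specializes to TP2. -/

def IsTP2On {α β M : Type*} [LE α] [LE β] [Mul M] [LE M] (f : α → β → M) (s : Set α)
    (t : Set β) : Prop :=
  ∀ u ∈ s, ∀ v ∈ t, ∀ u' ∈ s, ∀ v' ∈ t, u ≤ u' → v ≤ v' → f u v' * f u' v ≤ f u v * f u' v'

namespace IsTP2On

variable {α β M : Type*}

theorem congr [LE α] [LE β] [Mul M] [LE M] {f g : α → β → M} {s : Set α} {t : Set β}
    (hf : IsTP2On f s t) (hfg : ∀ x ∈ s, ∀ y ∈ t, f x y = g x y) : IsTP2On g s t := by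
  intro u hu v hv u' hu' v' hv' huu hvv
  simpa only [hfg _ hu _ hv, hfg _ hu _ hv', hfg _ hu' _ hv, hfg _ hu' _ hv'] using
    hf u hu v hv u' hu' v' hv' huu hvv

theorem comp_antitone {α' β' : Type*} [Preorder α] [Preorder β] [Preorder α'] [Preorder β']
    [CommMagma M] [LE M] {g : α → β → M} {s : Set α} {t : Set β} (hg : IsTP2On g s t)
    {φ : α' → α} {ψ : β' → β} {s' : Set α'} {t' : Set β'}
    (hφ : Antitone φ) (hψ : Antitone ψ) (hφs : MapsTo φ s' s) (hψt : MapsTo ψ t' t) :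
    IsTP2On (fun x y => g (φ x) (ψ y)) s' t' := by
  intro x hx y hy x' hx' y' hy' hxx hyy
  simpa only [mul_comm] using hg (φ x') (hφs hx') (ψ y') (hψt hy') (φ x) (hφs hx) (ψ y) (hψt hy)
    (hφ hxx) (hψ hyy)

variable [LinearOrder α] [LinearOrder β] {S : α → β → M}

theorem mul_le_inf_mul_sup [CommMagma M] [Preorder M] (hS : IsTP2On S univ univ)
    (x₁ x₂ : α) (y₁ y₂ : β) :
    S x₁ y₁ * S x₂ y₂ ≤ S (x₁ ⊓ x₂) (y₁ ⊓ y₂) * S (x₁ ⊔ x₂) (y₁ ⊔ y₂) := by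
  rcases le_total x₁ x₂ with hx | hx <;> rcases le_total y₁ y₂ with hy | hy
  · simp [hx, hy]
  · simpa [hx, hy] using hS x₁ trivial y₂ trivial x₂ trivial y₁ trivial hx hy
  · simpa [hx, hy, mul_comm] using hS x₂ trivial y₁ trivial x₁ trivial y₂ trivial hx hy
  · simp [hx, hy, mul_comm]

theorem univ_iff_of_antitone [CommSemiring M] [PartialOrder M] [IsOrderedRing M] (hS₀ : 0 ≤ S)
    (hS : Antitone (Function.uncurry S)) :
    IsTP2On S univ univ ↔ ∀ x y x' y' x'' y'', x' ≤ x'' → y' ≤ y'' →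
      S (x ⊔ x') (y ⊔ y') * S x'' y'' ≤ S (x ⊔ x'') (y ⊔ y'') * S x' y' := by
  constructor
  · intro h x y x' y' x'' y'' hx hy
    calc S (x ⊔ x') (y ⊔ y') * S x'' y''
        ≤ S ((x ⊔ x') ⊓ x'') ((y ⊔ y') ⊓ y'') * S ((x ⊔ x') ⊔ x'') ((y ⊔ y') ⊔ y'') :=
          h.mul_le_inf_mul_sup _ _ _ _
      _ ≤ S x' y' * S (x ⊔ x'') (y ⊔ y'') := by
          rw [sup_assoc, sup_eq_right.2 hx, sup_assoc, sup_eq_right.2 hy]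
          exact mul_le_mul_of_nonneg_right
            (@hS (x', y') (_, _) ⟨le_inf le_sup_right hx, le_inf le_sup_right hy⟩) (hS₀ _ _)
      _ = _ := mul_comm _ _
  · intro h u _ v _ u' _ v' _ hu hv
    simpa [hu, hv, mul_comm] using h u' v u v u v' le_rfl hv

end IsTP2On

def jointSurvival (μ : Measure (ℝ × ℝ)) (x y : ℝ) : ℝ := μ.real (Ioi x ×ˢ Ioi y)

theorem antitone_jointSurvival (μ : Measure (ℝ × ℝ)) [IsFiniteMeasure μ] :
    Antitone (Function.uncurry (jointSurvival μ)) :=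
  fun _ _ h => measureReal_mono (prod_mono (Ioi_subset_Ioi h.1) (Ioi_subset_Ioi h.2))

theorem isIncDir2_one_one_iff {μ : Measure (ℝ × ℝ)} [IsFiniteMeasure μ] :
    IsIncDir2 μ 1 1 ↔ ∀ x y x' y' x'' y'' : ℝ, x' ≤ x'' → y' ≤ y'' →
      jointSurvival μ (x ⊔ x') (y ⊔ y') * jointSurvival μ x'' y'' ≤
        jointSurvival μ (x ⊔ x'') (y ⊔ y'') * jointSurvival μ x' y' := by
  have quadrant (x y : ℝ) : {p : ℝ × ℝ | 1 * p.1 > x ∧ 1 * p.2 > y} = Ioi x ×ˢ Ioi y := by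
    ext; simp
  have quadrant_inter (x y x' y' : ℝ) :
      {p : ℝ × ℝ | (1 * p.1 > x ∧ 1 * p.2 > y) ∧ (1 * p.1 > x' ∧ 1 * p.2 > y')} =
        Ioi (x ⊔ x') ×ˢ Ioi (y ⊔ y') := by
    ext; simp only [mem_ofPred_eq, one_mul, mem_prod, mem_Ioi, max_lt_iff]; tauto
  have toReal_iff (s t s' t' : Set (ℝ × ℝ)) :
      μ s * μ t ≤ μ s' * μ t' ↔ μ.real s * μ.real t ≤ μ.real s' * μ.real t' := by
    simp only [measureReal_def, ← ENNReal.toReal_mul]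
    exact (ENNReal.toReal_le_toReal (by finiteness) (by finiteness)).symm
  simp only [IsIncDir2, quadrant, quadrant_inter, toReal_iff, jointSurvival]

def survivalCopula (C : ℝ → ℝ → ℝ) (u v : ℝ) : ℝ := u + v - 1 + C (1 - u) (1 - v)

theorem IsCopula2.nonneg_s3 {C : ℝ → ℝ → ℝ} (hC : IsCopula2 C) {u v : ℝ} (hu : u ∈ Icc (0:ℝ) 1)
    (hv : v ∈ Icc (0:ℝ) 1) : 0 ≤ C u v := by
  have h := hC.twoIncreasing 0 u 0 v (left_mem_Icc.2 zero_le_one) hu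
    (left_mem_Icc.2 zero_le_one) hv hu.1 hv.1
  rwa [hC.grounded_right u hu, hC.grounded_left v hv, hC.grounded_left 0
    (left_mem_Icc.2 zero_le_one), sub_zero, sub_zero, add_zero] at h

theorem lt_iff_projIcc_lt {p : ℝ} (hp : p ∈ Ioc (0:ℝ) 1) (x : ℝ) :
    x < p ↔ (projIcc 0 1 zero_le_one x : ℝ) < p := by
  rcases le_or_gt x 0 with hx | hx
  · rw [projIcc_of_le_left _ hx]
    exact iff_of_true (hx.trans_lt hp.1) hp.1
  rcases le_or_gt 1 x with hx' | hx'
  · rw [projIcc_of_right_le _ hx']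
    exact iff_of_false (hp.2.trans hx').not_gt hp.2.not_gt
  · rw [projIcc_of_mem _ ⟨hx.le, hx'.le⟩]

section CopulaMeasure

variable {C : ℝ → ℝ → ℝ} {μ : Measure (ℝ × ℝ)} [IsProbabilityMeasure μ]

theorem ae_mem_Ioc_prod_Ioc (hC : IsCopula2 C) (hsupp : μ (Icc (0:ℝ) 1 ×ˢ Icc (0:ℝ) 1) = 1)
    (hμC : ∀ u ∈ Icc (0:ℝ) 1, ∀ v ∈ Icc (0:ℝ) 1,
      μ (Icc 0 u ×ˢ Icc 0 v) = ENNReal.ofReal (C u v)) :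
    ∀ᵐ p ∂μ, p ∈ Ioc (0:ℝ) 1 ×ˢ Ioc (0:ℝ) 1 := by
  have h0 : (0:ℝ) ∈ Icc 0 1 := left_mem_Icc.2 zero_le_one
  have h1 : (1:ℝ) ∈ Icc 0 1 := right_mem_Icc.2 zero_le_one
  have hI : ∀ᵐ p ∂μ, p ∈ Icc (0:ℝ) 1 ×ˢ Icc (0:ℝ) 1 :=
    (mem_ae_iff_prob_eq_one (measurableSet_Icc.prod measurableSet_Icc)).2 hsupp
  have hfst : ∀ᵐ p ∂μ, p ∉ Icc (0:ℝ) 0 ×ˢ Icc (0:ℝ) 1 := measure_eq_zero_iff_ae_notMem.1 <| by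
    rw [hμC 0 h0 1 h1, hC.grounded_left 1 h1, ENNReal.ofReal_zero]
  have hsnd : ∀ᵐ p ∂μ, p ∉ Icc (0:ℝ) 1 ×ˢ Icc (0:ℝ) 0 := measure_eq_zero_iff_ae_notMem.1 <| by
    rw [hμC 1 h1 0 h0, hC.grounded_right 1 h1, ENNReal.ofReal_zero]
  filter_upwards [hI, hfst, hsnd] with p hp hp₁ hp₂
  simp only [mem_prod, mem_Icc, mem_Ioc, Icc_self, mem_singleton_iff] at *
  refine ⟨⟨lt_of_le_of_ne hp.1.1 ?_, hp.1.2⟩, ⟨lt_of_le_of_ne hp.2.1 ?_, hp.2.2⟩⟩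
  · exact fun h => hp₁ ⟨h.symm, hp.2⟩
  · exact fun h => hp₂ ⟨hp.1, h.symm⟩

theorem measureReal_Ioc_prod_Ioc (hC : IsCopula2 C) (hsupp : μ (Icc (0:ℝ) 1 ×ˢ Icc (0:ℝ) 1) = 1)
    (hμC : ∀ u ∈ Icc (0:ℝ) 1, ∀ v ∈ Icc (0:ℝ) 1,
      μ (Icc 0 u ×ˢ Icc 0 v) = ENNReal.ofReal (C u v))
    {a b : ℝ} (ha : a ∈ Icc (0:ℝ) 1) (hb : b ∈ Icc (0:ℝ) 1) :
    μ.real (Ioc a 1 ×ˢ Ioc b 1) = survivalCopula C (1 - a) (1 - b) := by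
  have h1 : (1:ℝ) ∈ Icc 0 1 := right_mem_Icc.2 zero_le_one
  have hcdf : ∀ u ∈ Icc (0:ℝ) 1, ∀ v ∈ Icc (0:ℝ) 1, μ.real (Icc 0 u ×ˢ Icc 0 v) = C u v :=
    fun u hu v hv => by rw [measureReal_def, hμC u hu v hv, ENNReal.toReal_ofReal (hC.nonneg_s3 hu hv)]
  have hdiff : Ioc a 1 ×ˢ Ioc b 1 =
      (Icc 0 1 ×ˢ Icc 0 1) \ (Icc 0 a ×ˢ Icc 0 1 ∪ Icc 0 1 ×ˢ Icc 0 b) := by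
    ext ⟨p, q⟩
    simp only [mem_prod, mem_Ioc, mem_Icc, mem_sdiff, mem_union]
    constructor
    · rintro ⟨⟨hp, hp'⟩, hq, hq'⟩
      exact ⟨⟨⟨ha.1.trans hp.le, hp'⟩, hb.1.trans hq.le, hq'⟩, by
        rintro (⟨⟨_, h⟩, _⟩ | ⟨_, _, h⟩) <;> linarith⟩
    · rintro ⟨⟨⟨hp, hp'⟩, hq, hq'⟩, h⟩
      refine ⟨⟨?_, hp'⟩, ?_, hq'⟩ <;> by_contra! h' <;> exact h (by tauto)
  have hinter : Icc 0 a ×ˢ Icc 0 1 ∩ Icc 0 1 ×ˢ Icc 0 b = Icc (0:ℝ) a ×ˢ Icc (0:ℝ) b := by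
    simp only [prod_inter_prod, Icc_inter_Icc, max_self, min_eq_left ha.2, min_eq_right hb.2]
  have hunion := measureReal_union_add_inter (μ := μ) (s := Icc 0 a ×ˢ Icc (0:ℝ) 1)
    (t := Icc (0:ℝ) 1 ×ˢ Icc 0 b) (measurableSet_Icc.prod measurableSet_Icc)
  rw [hinter, hcdf a ha 1 h1, hcdf 1 h1 b hb, hcdf a ha b hb, hC.margin_left a ha,
    hC.margin_right b hb] at hunion
  rw [hdiff, measureReal_sdiff (union_subset (prod_mono (Icc_subset_Icc_right ha.2) subset_rfl)
      (prod_mono subset_rfl (Icc_subset_Icc_right hb.2)))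
      ((measurableSet_Icc.prod measurableSet_Icc).union (measurableSet_Icc.prod measurableSet_Icc)),
    measureReal_def, hsupp, survivalCopula, sub_sub_cancel, sub_sub_cancel]
  simp only [ENNReal.toReal_one]
  linarith

theorem measureReal_Ioi_prod_Ioi (hC : IsCopula2 C) (hsupp : μ (Icc (0:ℝ) 1 ×ˢ Icc (0:ℝ) 1) = 1)
    (hμC : ∀ u ∈ Icc (0:ℝ) 1, ∀ v ∈ Icc (0:ℝ) 1,
      μ (Icc 0 u ×ˢ Icc 0 v) = ENNReal.ofReal (C u v)) (x y : ℝ) :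
    jointSurvival μ x y = survivalCopula C (1 - projIcc 0 1 zero_le_one x)
      (1 - projIcc 0 1 zero_le_one y) := by
  rw [jointSurvival, ← measureReal_Ioc_prod_Ioc hC hsupp hμC (Subtype.prop _) (Subtype.prop _)]
  refine measureReal_congr (Filter.eventuallyEq_set.2 ?_)
  filter_upwards [ae_mem_Ioc_prod_Ioc hC hsupp hμC] with p ⟨hp₁, hp₂⟩
  simp only [mem_prod, mem_Ioi, mem_Ioc]
  rw [lt_iff_projIcc_lt hp₁ x, lt_iff_projIcc_lt hp₂ y]
  simp only [hp₁.2, hp₂.2, and_true]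

theorem isTP2On_jointSurvival_iff (hC : IsCopula2 C)
    (hsupp : μ (Icc (0:ℝ) 1 ×ˢ Icc (0:ℝ) 1) = 1)
    (hμC : ∀ u ∈ Icc (0:ℝ) 1, ∀ v ∈ Icc (0:ℝ) 1,
      μ (Icc 0 u ×ˢ Icc 0 v) = ENNReal.ofReal (C u v)) :
    IsTP2On (jointSurvival μ) univ univ ↔ IsTP2On (survivalCopula C) (Icc 0 1) (Icc 0 1) := by
  have hsurv := measureReal_Ioi_prod_Ioi hC hsupp hμC
  constructor
  · intro h
    have hφ : Antitone fun u : ℝ => 1 - u := fun _ _ huv => sub_le_sub_left huv 1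
    refine (h.comp_antitone hφ hφ (mapsTo_univ _ _) (mapsTo_univ _ _)).congr fun u hu v hv => ?_
    simp only [hsurv, projIcc_of_mem _ (Icc.one_sub_mem hu), projIcc_of_mem _ (Icc.one_sub_mem hv),
      sub_sub_cancel]
  · intro h
    have hφ : Antitone fun x : ℝ => 1 - (projIcc 0 1 zero_le_one x : ℝ) :=
      fun _ _ hxy => sub_le_sub_left (Subtype.mono_coe _ (monotone_projIcc zero_le_one hxy)) 1
    have hφI (x : ℝ) : 1 - (projIcc 0 1 zero_le_one x : ℝ) ∈ Icc 0 1 :=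
      Icc.one_sub_mem (Subtype.prop _)
    exact (h.comp_antitone hφ hφ (fun x _ => hφI x) (fun y _ => hφI y)).congr
      fun x _ y _ => (hsurv x y).symm

end CopulaMeasure

theorem copula_I_1_1_iff (C : ℝ → ℝ → ℝ) (hC : IsCopula2 C)
    (μ : Measure (ℝ × ℝ)) [IsProbabilityMeasure μ]
    (hsupp : μ (Icc (0:ℝ) 1 ×ˢ Icc (0:ℝ) 1) = 1)
    (hμC : ∀ u ∈ Icc (0:ℝ) 1, ∀ v ∈ Icc (0:ℝ) 1,
      μ (Icc 0 u ×ˢ Icc 0 v) = ENNReal.ofReal (C u v))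
    (Chat : ℝ → ℝ → ℝ)
    (hChat : ∀ u v : ℝ, Chat u v = u + v - 1 + C (1 - u) (1 - v)) :
    IsIncDir2 μ 1 1 ↔
      ∀ u ∈ Icc (0:ℝ) 1, ∀ v ∈ Icc (0:ℝ) 1, ∀ u' ∈ Icc (0:ℝ) 1, ∀ v' ∈ Icc (0:ℝ) 1,
        u ≤ u' → v ≤ v' →
        Chat u v * Chat u' v' ≥ Chat u v' * Chat u' v := by
  obtain rfl : Chat = survivalCopula C := funext₂ hChat
  change _ ↔ IsTP2On (survivalCopula C) (Icc 0 1) (Icc 0 1)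
  rw [isIncDir2_one_one_iff, ← isTP2On_jointSurvival_iff hC hsupp hμC,
    IsTP2On.univ_iff_of_antitone (fun _ _ => measureReal_nonneg) (antitone_jointSurvival μ)]
end

section
/- For the Ali–Mikhail–Haq family of 2-copulas C_δ(u,v) = uv / (1 + δ(1-u)(1-v)): if δ ∈ [0,1] then C_δ satisfies the I(1,-1) characterizing inequality [v - C_δ(u,v)]·[v' - C_δ(u',v')] ≤ [v - C_δ(u',v)]·[v' - C_δ(u,v')] and the I(-1,1) characterizing inequality [u - C_δ(u,v)]·[u' - C_δ(u',v')] ≤ [u' - C_δ(u',v)]·[u - C_δ(u,v')] for all u ≤ u' and v ≤ v' in [0,1]; and if δ ∈ [-1,0] then C_δ satisfies the I(-1,-1) characterizing inequality C_δ(u,v)·C_δ(u',v') ≥ C_δ(u,v')·C_δ(u',v) and the I(1,1) characterizing inequality Ĉ_δ(u,v)·Ĉ_δ(u',v') ≥ Ĉ_δ(u,v')·Ĉ_δ(u',v) for all u ≤ u' and v ≤ v' in [0,1]. -/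
/-!
With `D(u, v) = 1 + δ (1 - u) (1 - v)` one has the identity
`D(u, v) D(u', v') - D(u, v') D(u', v) = δ (u' - u) (v' - v)`.
Both `C_δ = uv / D` and `v - C_δ(u, v) = v (1 - u) (1 + δ (1 - v)) / D` have numerators that
split as a function of `u` times a function of `v`, so in each 2×2 inequality the numerators
cancel and only the sign of this mixed difference of `D` matters; the `(-1, 1)` case is the
`(1, -1)` case for the symmetric `C_δ` with the roles of `u` and `v` exchanged.

The survival copula is `Ĉ_δ(u, v) = uv (1 + δ (u + v - 1)) / (1 + δ uv)`, and for the ratio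
`r = (1 + δ (u + v - 1)) / (1 + δ uv)` the cross-multiplied 2×2 difference is
`-δ (u' - u) (v' - v) (L L' + δ E E')` with `L ≥ E > 0` the numerators and denominators at the
two diagonal corners, which is nonnegative for `δ ∈ [-1, 0]`. At the corner `u' = v' = 1` the
formula breaks down for `δ = -1`; there the inequality reduces, through the uniform margins,
to `uv ≤ Ĉ_δ(u, v)`, i.e. positive quadrant dependence of `C_δ`.
-/

open Set

noncomputable section

def amhDenom (δ u v : ℝ) : ℝ := 1 + δ * (1 - u) * (1 - v)

def amh (δ u v : ℝ) : ℝ := u * v / amhDenom δ u v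

def amhSurvival (δ u v : ℝ) : ℝ := u + v - 1 + amh δ (1 - u) (1 - v)

end

theorem div_mul_div_le_div_mul_div_of_mul_eq {a b c d x y z w : ℝ} (habcd : a * b = c * d)
    (hcd : 0 ≤ c * d) (hzw : 0 < z * w) (h : z * w ≤ x * y) :
    a / x * (b / y) ≤ c / z * (d / w) := by
  rw [div_mul_div_comm, div_mul_div_comm, habcd]
  exact div_le_div_of_nonneg_left hcd hzw h

section AMH

variable {δ u v u' v' : ℝ}

theorem amhDenom_mul_amhDenom (δ u v u' v' : ℝ) :
    amhDenom δ u v * amhDenom δ u' v' =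
      amhDenom δ u v' * amhDenom δ u' v + δ * (u' - u) * (v' - v) := by
  unfold amhDenom; ring

theorem amhDenom_pos_of_nonneg (hδ : 0 ≤ δ) (hu : u ≤ 1) (hv : v ≤ 1) : 0 < amhDenom δ u v := by
  unfold amhDenom
  have := mul_nonneg (mul_nonneg hδ (sub_nonneg.2 hu)) (sub_nonneg.2 hv)
  linarith

theorem amhDenom_pos_of_neg_one_le (hδ : -1 ≤ δ) (hu₀ : 0 < u) (hu₁ : u ≤ 1) (hv₀ : 0 ≤ v)
    (hv₁ : v ≤ 1) : 0 < amhDenom δ u v := by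
  unfold amhDenom
  nlinarith [mul_nonneg (mul_nonneg (neg_le_iff_add_nonneg'.1 hδ) (sub_nonneg.2 hu₁))
    (sub_nonneg.2 hv₁), mul_nonneg (sub_nonneg.2 hu₁) hv₀]

theorem amh_comm (δ u v : ℝ) : amh δ u v = amh δ v u := by
  unfold amh amhDenom; ring

theorem amh_zero_left (δ v : ℝ) : amh δ 0 v = 0 := by simp [amh]

theorem amh_zero_right (δ u : ℝ) : amh δ u 0 = 0 := by simp [amh]

theorem sub_amh_eq (h : amhDenom δ u v ≠ 0) :
    v - amh δ u v = v * (1 - u) * (1 + δ * (1 - v)) / amhDenom δ u v := by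
  rw [amh, eq_div_iff h, sub_mul, div_mul_cancel₀ _ h, amhDenom]; ring

theorem sub_amh_mul_sub_amh_le (hδ : 0 ≤ δ) (hu' : u' ≤ 1) (hv : 0 ≤ v) (hv' : v' ≤ 1)
    (huu : u ≤ u') (hvv : v ≤ v') :
    (v - amh δ u v) * (v' - amh δ u' v') ≤ (v - amh δ u' v) * (v' - amh δ u v') := by
  have hD : ∀ x y, x ≤ 1 → y ≤ 1 → 0 < amhDenom δ x y := fun _ _ => amhDenom_pos_of_nonneg hδ
  have hD₁₁ := hD u v (huu.trans hu') (hvv.trans hv')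
  have hD₁₂ := hD u v' (huu.trans hu') hv'
  have hD₂₁ := hD u' v hu' (hvv.trans hv')
  have hD₂₂ := hD u' v' hu' hv'
  rw [sub_amh_eq hD₁₁.ne', sub_amh_eq hD₁₂.ne', sub_amh_eq hD₂₁.ne', sub_amh_eq hD₂₂.ne']
  refine div_mul_div_le_div_mul_div_of_mul_eq (by ring) ?_ (mul_pos hD₂₁ hD₁₂) ?_
  · have hw : ∀ y, y ≤ 1 → 0 ≤ 1 + δ * (1 - y) := fun y hy => by
      have := mul_nonneg hδ (sub_nonneg.2 hy); linarith
    have := hw v (hvv.trans hv'); have := hw v' hv'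
    have := sub_nonneg.2 hu'; have := sub_nonneg.2 (huu.trans hu')
    have := hv.trans hvv
    positivity
  · rw [mul_comm (amhDenom δ u' v), amhDenom_mul_amhDenom]
    have := mul_nonneg (mul_nonneg hδ (sub_nonneg.2 huu)) (sub_nonneg.2 hvv)
    linarith

theorem sub_amh_mul_sub_amh_le' (hδ : 0 ≤ δ) (hu : 0 ≤ u) (hu' : u' ≤ 1) (hv' : v' ≤ 1)
    (huu : u ≤ u') (hvv : v ≤ v') :
    (u - amh δ u v) * (u' - amh δ u' v') ≤ (u' - amh δ u' v) * (u - amh δ u v') := by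
  simpa only [amh_comm δ _ u, amh_comm δ _ u', mul_comm (u' - _)] using
    sub_amh_mul_sub_amh_le hδ hv' hu hu' hvv huu

theorem amh_mul_amh_le (hδ₀ : -1 ≤ δ) (hδ₁ : δ ≤ 0) (hu : 0 ≤ u) (hu' : u' ≤ 1) (hv : 0 ≤ v)
    (hv' : v' ≤ 1) (huu : u ≤ u') (hvv : v ≤ v') :
    amh δ u v' * amh δ u' v ≤ amh δ u v * amh δ u' v' := by
  rcases hu.eq_or_lt with rfl | hu₀
  · simp [amh_zero_left]
  have hD₁₁ := amhDenom_pos_of_neg_one_le hδ₀ hu₀ (huu.trans hu') hv (hvv.trans hv')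
  have hD₂₂ := amhDenom_pos_of_neg_one_le hδ₀ (hu₀.trans_le huu) hu' (hv.trans hvv) hv'
  have huv : 0 ≤ u * v * (u' * v') := by
    have := hu.trans huu; have := hv.trans hvv; positivity
  refine div_mul_div_le_div_mul_div_of_mul_eq (by ring) huv (mul_pos hD₁₁ hD₂₂) ?_
  rw [amhDenom_mul_amhDenom]
  have := mul_nonneg (mul_nonneg (neg_nonneg.2 hδ₁) (sub_nonneg.2 huu)) (sub_nonneg.2 hvv)
  linarith

theorem mul_le_amh (hδ₀ : -1 ≤ δ) (hδ₁ : δ ≤ 0) (hu₀ : 0 ≤ u) (hu₁ : u ≤ 1) (hv₀ : 0 ≤ v)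
    (hv₁ : v ≤ 1) : u * v ≤ amh δ u v := by
  rcases hu₀.eq_or_lt with rfl | hu₀
  · simp [amh_zero_left]
  have hD := amhDenom_pos_of_neg_one_le hδ₀ hu₀ hu₁ hv₀ hv₁
  rw [amh, le_div_iff₀ hD, amhDenom]
  have := mul_nonneg (mul_nonneg (mul_nonneg (neg_nonneg.2 hδ₁) (mul_nonneg hu₀.le hv₀))
    (sub_nonneg.2 hu₁)) (sub_nonneg.2 hv₁)
  nlinarith

theorem amhSurvival_one_right (δ u : ℝ) : amhSurvival δ u 1 = u := by
  simp [amhSurvival, amh_zero_right]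

theorem amhSurvival_one_left (δ v : ℝ) : amhSurvival δ 1 v = v := by
  simp [amhSurvival, amh_zero_left]

theorem amhSurvival_eq (h : 1 + δ * u * v ≠ 0) :
    amhSurvival δ u v = u * v * ((1 + δ * (u + v - 1)) / (1 + δ * u * v)) := by
  have h' : amhDenom δ (1 - u) (1 - v) = 1 + δ * u * v := by unfold amhDenom; ring
  rw [amhSurvival, amh, h', mul_div_assoc', eq_div_iff h, add_mul, div_mul_cancel₀ _ h]
  ring

theorem one_add_mul_mul_pos {x y : ℝ} (hδ : -1 ≤ δ) (hx : 0 ≤ x) (hy : 0 ≤ y) (hxy : x * y < 1) :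
    0 < 1 + δ * x * y := by
  nlinarith [mul_nonneg (neg_le_iff_add_nonneg'.1 hδ) (mul_nonneg hx hy)]

theorem amhSurvival_ratio_mul_le (hδ₀ : -1 ≤ δ) (hδ₁ : δ ≤ 0) (hu : 0 ≤ u) (hu' : u' ≤ 1)
    (hv : 0 ≤ v) (hv' : v' ≤ 1) (huu : u ≤ u') (hvv : v ≤ v') (h : u' * v' < 1) :
    (1 + δ * (u + v' - 1)) / (1 + δ * u * v') * ((1 + δ * (u' + v - 1)) / (1 + δ * u' * v)) ≤
      (1 + δ * (u + v - 1)) / (1 + δ * u * v) * ((1 + δ * (u' + v' - 1)) / (1 + δ * u' * v')) := by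
  have hu₀' := hu.trans huu
  have hv₀' := hv.trans hvv
  have hE : ∀ x y, 0 ≤ x → x ≤ u' → 0 ≤ y → y ≤ v' → 0 < 1 + δ * x * y := fun x y hx hxu hy hyv =>
    one_add_mul_mul_pos hδ₀ hx hy ((mul_le_mul hxu hyv hy hu₀').trans_lt h)
  have hE₁₁ := hE u v hu huu hv hvv
  have hE₂₂ := hE u' v' hu₀' le_rfl hv₀' le_rfl
  rw [div_mul_div_comm, div_mul_div_comm, div_le_div_iff₀
    (mul_pos (hE u v' hu huu hv₀' le_rfl) (hE u' v hu₀' le_rfl hv hvv)) (mul_pos hE₁₁ hE₂₂)]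
  have hLE : ∀ x y, x ≤ 1 → y ≤ 1 → 1 + δ * x * y ≤ 1 + δ * (x + y - 1) := fun x y hx hy => by
    nlinarith [mul_nonneg (mul_nonneg (neg_nonneg.2 hδ₁) (sub_nonneg.2 hx)) (sub_nonneg.2 hy)]
  have hprod := mul_le_mul (hLE u v (huu.trans hu') (hvv.trans hv')) (hLE u' v' hu' hv')
    hE₂₂.le (hE₁₁.le.trans (hLE u v (huu.trans hu') (hvv.trans hv')))
  have hsum : 0 ≤ (1 + δ * (u + v - 1)) * (1 + δ * (u' + v' - 1)) +
      δ * ((1 + δ * u * v) * (1 + δ * u' * v')) := by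
    nlinarith [mul_pos hE₁₁ hE₂₂]
  have hq := mul_nonneg (mul_nonneg (neg_nonneg.2 hδ₁) (sub_nonneg.2 huu)) (sub_nonneg.2 hvv)
  -- the difference of the two sides is `-δ (u' - u) (v' - v)` times the right side of `hsum`
  nlinarith [mul_nonneg hq hsum]

theorem mul_le_amhSurvival (hδ₀ : -1 ≤ δ) (hδ₁ : δ ≤ 0) (hu₀ : 0 ≤ u) (hu₁ : u ≤ 1)
    (hv₀ : 0 ≤ v) (hv₁ : v ≤ 1) : u * v ≤ amhSurvival δ u v := by
  have := mul_le_amh hδ₀ hδ₁ (sub_nonneg.2 hu₁) (by linarith) (sub_nonneg.2 hv₁) (by linarith)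
  rw [amhSurvival]
  linarith

theorem amhSurvival_mul_amhSurvival_le (hδ₀ : -1 ≤ δ) (hδ₁ : δ ≤ 0) (hu : 0 ≤ u) (hu' : u' ≤ 1)
    (hv : 0 ≤ v) (hv' : v' ≤ 1) (huu : u ≤ u') (hvv : v ≤ v') :
    amhSurvival δ u v' * amhSurvival δ u' v ≤ amhSurvival δ u v * amhSurvival δ u' v' := by
  have hu₀' := hu.trans huu
  have hv₀' := hv.trans hvv
  by_cases h : u' * v' < 1
  · have hE : ∀ x y, 0 ≤ x → x ≤ u' → 0 ≤ y → y ≤ v' → 1 + δ * x * y ≠ 0 :=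
      fun x y hx hxu hy hyv => (one_add_mul_mul_pos hδ₀ hx hy
        ((mul_le_mul hxu hyv hy hu₀').trans_lt h)).ne'
    rw [amhSurvival_eq (hE u v hu huu hv hvv), amhSurvival_eq (hE u v' hu huu hv₀' le_rfl),
      amhSurvival_eq (hE u' v hu₀' le_rfl hv hvv), amhSurvival_eq (hE u' v' hu₀' le_rfl hv₀' le_rfl)]
    have huv : 0 ≤ u * v * (u' * v') := by positivity
    calc _ = u * v * (u' * v') * ((1 + δ * (u + v' - 1)) / (1 + δ * u * v') *
            ((1 + δ * (u' + v - 1)) / (1 + δ * u' * v))) := by ring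
      _ ≤ u * v * (u' * v') * ((1 + δ * (u + v - 1)) / (1 + δ * u * v) *
            ((1 + δ * (u' + v' - 1)) / (1 + δ * u' * v'))) :=
        mul_le_mul_of_nonneg_left
          (amhSurvival_ratio_mul_le hδ₀ hδ₁ hu hu' hv hv' huu hvv h) huv
      _ = _ := by ring
  · obtain ⟨rfl, rfl⟩ : u' = 1 ∧ v' = 1 := by
      constructor <;> nlinarith [mul_le_mul hu' hv' hv₀' zero_le_one]
    rw [amhSurvival_one_right, amhSurvival_one_left, amhSurvival_one_left, mul_one]
    exact mul_le_amhSurvival hδ₀ hδ₁ hu huu hv hvv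

end AMH

/-- The Ali–Mikhail–Haq copula `C_δ(u,v) = uv / (1 + δ(1-u)(1-v))` satisfies the
characterizing inequalities for I(1,-1) and I(-1,1) when `δ ∈ [0,1]`, and the
characterizing inequalities for I(-1,-1) and I(1,1) when `δ ∈ [-1,0]`. -/
theorem AMH_directional_inequalities (δ : ℝ)
    (C : ℝ → ℝ → ℝ) (hC : ∀ u v : ℝ, C u v = u * v / (1 + δ * (1 - u) * (1 - v)))
    (Chat : ℝ → ℝ → ℝ) (hChat : ∀ u v : ℝ, Chat u v = u + v - 1 + C (1 - u) (1 - v)) :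
    (δ ∈ Icc (0:ℝ) 1 →
      (∀ u ∈ Icc (0:ℝ) 1, ∀ v ∈ Icc (0:ℝ) 1, ∀ u' ∈ Icc (0:ℝ) 1, ∀ v' ∈ Icc (0:ℝ) 1,
        u ≤ u' → v ≤ v' →
        (v - C u v) * (v' - C u' v') ≤ (v - C u' v) * (v' - C u v')) ∧
      (∀ u ∈ Icc (0:ℝ) 1, ∀ v ∈ Icc (0:ℝ) 1, ∀ u' ∈ Icc (0:ℝ) 1, ∀ v' ∈ Icc (0:ℝ) 1,
        u ≤ u' → v ≤ v' →
        (u - C u v) * (u' - C u' v') ≤ (u' - C u' v) * (u - C u v'))) ∧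
    (δ ∈ Icc (-1:ℝ) 0 →
      (∀ u ∈ Icc (0:ℝ) 1, ∀ v ∈ Icc (0:ℝ) 1, ∀ u' ∈ Icc (0:ℝ) 1, ∀ v' ∈ Icc (0:ℝ) 1,
        u ≤ u' → v ≤ v' →
        C u v * C u' v' ≥ C u v' * C u' v) ∧
      (∀ u ∈ Icc (0:ℝ) 1, ∀ v ∈ Icc (0:ℝ) 1, ∀ u' ∈ Icc (0:ℝ) 1, ∀ v' ∈ Icc (0:ℝ) 1,
        u ≤ u' → v ≤ v' →
        Chat u v * Chat u' v' ≥ Chat u v' * Chat u' v)) := by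
  obtain rfl : C = amh δ := funext₂ hC
  obtain rfl : Chat = amhSurvival δ := funext₂ hChat
  refine ⟨fun hδ => ⟨?_, ?_⟩, fun hδ => ⟨?_, ?_⟩⟩
  all_goals intro u hu v hv u' hu' v' hv' huu hvv
  · exact sub_amh_mul_sub_amh_le hδ.1 hu'.2 hv.1 hv'.2 huu hvv
  · exact sub_amh_mul_sub_amh_le' hδ.1 hu.1 hu'.2 hv'.2 huu hvv
  · exact amh_mul_amh_le hδ.1 hδ.2 hu.1 hu'.2 hv.1 hv'.2 huu hvv
  · exact amhSurvival_mul_amhSurvival_le hδ.1 hδ.2 hu.1 hu'.2 hv.1 hv'.2 huu hvv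
end

section
/- For the Farlie–Gumbel–Morgenstern family of 2-copulas C_λ(u,v) = uv[1 + λ(1-u)(1-v)]: if λ ∈ [0,1] then C_λ satisfies the I(-1,-1) characterizing inequality C_λ(u,v)·C_λ(u',v') ≥ C_λ(u,v')·C_λ(u',v) and the I(1,1) characterizing inequality Ĉ_λ(u,v)·Ĉ_λ(u',v') ≥ Ĉ_λ(u,v')·Ĉ_λ(u',v) for all u ≤ u' and v ≤ v' in [0,1]; and if λ ∈ [-1,0] then C_λ satisfies the I(1,-1) characterizing inequality [v - C_λ(u,v)]·[v' - C_λ(u',v')] ≤ [v - C_λ(u',v)]·[v' - C_λ(u,v')] and the I(-1,1) characterizing inequality [u - C_λ(u,v)]·[u' - C_λ(u',v')] ≤ [u' - C_λ(u',v)]·[u - C_λ(u,v')] for all u ≤ u' and v ≤ v' in [0,1]. -/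
/-!
For I(-1,-1) and I(1,-1) the difference of the two sides factors as `±λ (u' - u) (v' - v)` times
a product of factors that are nonnegative on `[0,1]`. The FGM copula is radially symmetric
(`Ĉ_λ = C_λ`), so I(1,1) is I(-1,-1), and symmetric in its two arguments, so I(-1,1) is I(1,-1)
with the roles of `u` and `v` exchanged.
-/

open Set

def fgm (lam u v : ℝ) : ℝ := u * v * (1 + lam * (1 - u) * (1 - v))

section FGM

variable {lam u v u' v' : ℝ}

theorem fgm_comm (lam u v : ℝ) : fgm lam u v = fgm lam v u := by
  unfold fgm; ring

theorem fgm_survival (lam u v : ℝ) : u + v - 1 + fgm lam (1 - u) (1 - v) = fgm lam u v := by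
  unfold fgm; ring

theorem fgm_mul_fgm_sub (lam u v u' v' : ℝ) :
    fgm lam u v * fgm lam u' v' - fgm lam u v' * fgm lam u' v
      = lam * ((u' - u) * (v' - v)) * (u * u' * (v * v')) := by
  unfold fgm; ring

theorem sub_fgm_mul_sub_fgm_sub (lam u v u' v' : ℝ) :
    (v - fgm lam u' v) * (v' - fgm lam u v') - (v - fgm lam u v) * (v' - fgm lam u' v')
      = -lam * ((u' - u) * (v' - v)) * (v * v' * ((1 - u) * (1 - u'))) := by
  unfold fgm; ring

theorem fgm_mul_fgm_le (hlam : 0 ≤ lam) (hu : 0 ≤ u) (hv : 0 ≤ v) (huu' : u ≤ u')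
    (hvv' : v ≤ v') : fgm lam u v' * fgm lam u' v ≤ fgm lam u v * fgm lam u' v' := by
  rw [← sub_nonneg, fgm_mul_fgm_sub]
  have hdiff : 0 ≤ (u' - u) * (v' - v) := mul_nonneg (by linarith) (by linarith)
  exact mul_nonneg (mul_nonneg hlam hdiff)
    (mul_nonneg (mul_nonneg hu (by linarith)) (mul_nonneg hv (by linarith)))

theorem sub_fgm_mul_sub_fgm_le (hlam : lam ≤ 0) (hv : 0 ≤ v) (huu' : u ≤ u') (hu' : u' ≤ 1)
    (hvv' : v ≤ v') :
    (v - fgm lam u v) * (v' - fgm lam u' v') ≤ (v - fgm lam u' v) * (v' - fgm lam u v') := by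
  rw [← sub_nonneg, sub_fgm_mul_sub_fgm_sub]
  have hdiff : 0 ≤ (u' - u) * (v' - v) := mul_nonneg (by linarith) (by linarith)
  exact mul_nonneg (mul_nonneg (neg_nonneg.2 hlam) hdiff)
    (mul_nonneg (mul_nonneg hv (by linarith)) (mul_nonneg (by linarith) (by linarith)))

end FGM

/-- The Farlie–Gumbel–Morgenstern copula `C_λ(u,v) = uv(1 + λ(1-u)(1-v))` satisfies
the characterizing inequalities for I(-1,-1) and I(1,1) when `λ ∈ [0,1]`, and the
characterizing inequalities for I(1,-1) and I(-1,1) when `λ ∈ [-1,0]`. -/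
theorem FGM_directional_inequalities (lam : ℝ)
    (C : ℝ → ℝ → ℝ) (hC : ∀ u v : ℝ, C u v = u * v * (1 + lam * (1 - u) * (1 - v)))
    (Chat : ℝ → ℝ → ℝ) (hChat : ∀ u v : ℝ, Chat u v = u + v - 1 + C (1 - u) (1 - v)) :
    (lam ∈ Icc (0:ℝ) 1 →
      (∀ u ∈ Icc (0:ℝ) 1, ∀ v ∈ Icc (0:ℝ) 1, ∀ u' ∈ Icc (0:ℝ) 1, ∀ v' ∈ Icc (0:ℝ) 1,
        u ≤ u' → v ≤ v' →
        C u v * C u' v' ≥ C u v' * C u' v) ∧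
      (∀ u ∈ Icc (0:ℝ) 1, ∀ v ∈ Icc (0:ℝ) 1, ∀ u' ∈ Icc (0:ℝ) 1, ∀ v' ∈ Icc (0:ℝ) 1,
        u ≤ u' → v ≤ v' →
        Chat u v * Chat u' v' ≥ Chat u v' * Chat u' v)) ∧
    (lam ∈ Icc (-1:ℝ) 0 →
      (∀ u ∈ Icc (0:ℝ) 1, ∀ v ∈ Icc (0:ℝ) 1, ∀ u' ∈ Icc (0:ℝ) 1, ∀ v' ∈ Icc (0:ℝ) 1,
        u ≤ u' → v ≤ v' →
        (v - C u v) * (v' - C u' v') ≤ (v - C u' v) * (v' - C u v')) ∧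
      (∀ u ∈ Icc (0:ℝ) 1, ∀ v ∈ Icc (0:ℝ) 1, ∀ u' ∈ Icc (0:ℝ) 1, ∀ v' ∈ Icc (0:ℝ) 1,
        u ≤ u' → v ≤ v' →
        (u - C u v) * (u' - C u' v') ≤ (u' - C u' v) * (u - C u v'))) := by
  obtain rfl : C = fgm lam := funext₂ hC
  obtain rfl : Chat = fgm lam := funext₂ fun u v => (hChat u v).trans (fgm_survival lam u v)
  refine ⟨fun ⟨hlam, _⟩ => ?_, fun ⟨_, hlam⟩ => ?_⟩
  · exact and_self_iff.2 fun u hu v hv u' _ v' _ huu' hvv' =>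
      fgm_mul_fgm_le hlam hu.1 hv.1 huu' hvv'
  · refine ⟨fun u _ v hv u' hu' v' _ huu' hvv' =>
      sub_fgm_mul_sub_fgm_le hlam hv.1 huu' hu'.2 hvv', fun u hu v _ u' _ v' hv' huu' hvv' => ?_⟩
    simp only [fgm_comm lam _ v, fgm_comm lam _ v']
    linarith [sub_fgm_mul_sub_fgm_le hlam hu.1 hvv' hv'.2 huu']
end

section
/- For the trivariate Farlie–Gumbel–Morgenstern family C_λ(u₁,u₂,u₃) = u₁u₂u₃[1 + λ(1-u₁)(1-u₂)(1-u₃)] with λ ∈ [0,1], the I(-1,-1,-1) characterizing inequality holds: C_λ(u,v,w)·C_λ(u',v',w') ≥ C_λ(u,v',w')·C_λ(u',v,w) for all u, v, w, u', v', w' in [0,1] with u ≤ u', v ≤ v', w ≤ w'. -/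
/-!
Writing `ū = 1 - u`, the two products differ only through their FGM correction terms, and
`C(u,v,w) C(u',v',w') - C(u,v',w') C(u',v,w)` factors as
`u v w u' v' w' · λ (u' - u) (w̄ v̄ - w̄' v̄')` (the `λ²` terms cancel). Each factor is
nonnegative when `λ ≥ 0` and the points are ordered in `[0,1]³`.
-/

open Set

def fgm3 (lam u₁ u₂ u₃ : ℝ) : ℝ :=
  u₁ * u₂ * u₃ * (1 + lam * (1 - u₁) * (1 - u₂) * (1 - u₃))

theorem fgm3_mul_sub_mul (lam u v w u' v' w' : ℝ) :
    fgm3 lam u v w * fgm3 lam u' v' w' - fgm3 lam u v' w' * fgm3 lam u' v w =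
      u * v * w * u' * v' * w' *
        (lam * (u' - u) * ((1 - w) * (1 - v) - (1 - w') * (1 - v'))) := by
  unfold fgm3; ring

theorem fgm3_mul_le_mul {lam u v w u' v' w' : ℝ} (hlam : 0 ≤ lam)
    (hu : 0 ≤ u) (hv : 0 ≤ v) (hw : 0 ≤ w) (hv' : v' ≤ 1) (hw1 : w ≤ 1)
    (huu : u ≤ u') (hvv : v ≤ v') (hww : w ≤ w') :
    fgm3 lam u v' w' * fgm3 lam u' v w ≤ fgm3 lam u v w * fgm3 lam u' v' w' := by
  have hprod : 0 ≤ u * v * w * u' * v' * w' := by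
    have := hu.trans huu; have := hv.trans hvv; have := hw.trans hww; positivity
  have hcorr : (1 - w') * (1 - v') ≤ (1 - w) * (1 - v) :=
    mul_le_mul (by linarith) (by linarith) (by linarith) (by linarith)
  rw [← sub_nonneg, fgm3_mul_sub_mul]
  exact mul_nonneg hprod <|
    mul_nonneg (mul_nonneg hlam (sub_nonneg.2 huu)) (sub_nonneg.2 hcorr)

/-- The trivariate Farlie–Gumbel–Morgenstern copula with `λ ∈ [0,1]` satisfies the
characterizing inequality for I(-1,-1,-1). -/
theorem FGM3_I_neg1neg1neg1 (lam : ℝ) (hlam : lam ∈ Icc (0:ℝ) 1)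
    (C : ℝ → ℝ → ℝ → ℝ)
    (hC : ∀ u₁ u₂ u₃ : ℝ,
      C u₁ u₂ u₃ = u₁ * u₂ * u₃ * (1 + lam * (1 - u₁) * (1 - u₂) * (1 - u₃))) :
    ∀ u ∈ Icc (0:ℝ) 1, ∀ v ∈ Icc (0:ℝ) 1, ∀ w ∈ Icc (0:ℝ) 1,
    ∀ u' ∈ Icc (0:ℝ) 1, ∀ v' ∈ Icc (0:ℝ) 1, ∀ w' ∈ Icc (0:ℝ) 1,
      u ≤ u' → v ≤ v' → w ≤ w' →
      C u v w * C u' v' w' ≥ C u v' w' * C u' v w := by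
  obtain rfl : C = fgm3 lam := funext fun u => funext fun v => funext fun w => hC u v w
  rintro u ⟨hu, -⟩ v ⟨hv, -⟩ w ⟨hw, hw1⟩ u' - v' ⟨-, hv'⟩ w' - huu hvv hww
  exact fgm3_mul_le_mul hlam.1 hu hv hw hv' hw1 huu hvv hww
end

section
/- For the trivariate Farlie–Gumbel–Morgenstern family C_λ(u₁,u₂,u₃) = u₁u₂u₃[1 + λ(1-u₁)(1-u₂)(1-u₃)] with λ ∈ [-1,0], the I(1,-1,-1) characterizing inequality holds: [vw - C_λ(u,v,w)]·[v'w' - C_λ(u',v',w')] ≤ [vw - C_λ(u',v,w)]·[v'w' - C_λ(u,v',w')] for all u, v, w, u', v', w' in [0,1] with u ≤ u', v ≤ v', w ≤ w'. -/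
/-!
Writing `a = (1 - v)(1 - w)`, the gap `vw - C_λ(u,v,w)` factors as `vw(1 - u)(1 - λua)`. After removing
the common nonnegative factor `vw(1 - u)·v'w'(1 - u')`, the inequality compares
`(1 - λua)(1 - λu'a')` with `(1 - λu'a)(1 - λua')`; the quadratic terms agree, and the linear terms
are ordered by the binary rearrangement inequality, since `u ≤ u'`, `a' ≤ a` and `-λ ≥ 0`.
-/

open Set

lemma one_sub_mul_mul_rearrangement {R : Type*} [CommRing R] [PartialOrder R] [IsOrderedRing R]
    {c x x' y y' : R} (hc : c ≤ 0) (hx : x ≤ x') (hy : y' ≤ y) :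
    (1 - c * x * y) * (1 - c * x' * y') ≤ (1 - c * x' * y) * (1 - c * x * y') := by
  have := mul_le_mul_of_nonpos_left (mul_add_mul_le_mul_add_mul hx hy) hc
  linear_combination this

lemma fgm3_gap_eq (lam u v w : ℝ) :
    v * w - u * v * w * (1 + lam * (1 - u) * (1 - v) * (1 - w)) =
      v * w * (1 - u) * (1 - lam * u * ((1 - v) * (1 - w))) := by
  ring

/-- The trivariate Farlie–Gumbel–Morgenstern copula with `λ ∈ [-1,0]` satisfies the
characterizing inequality for I(1,-1,-1) (here `C₂₃(v,w) = vw`). -/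
theorem FGM3_I_1neg1neg1 (lam : ℝ) (hlam : lam ∈ Icc (-1:ℝ) 0)
    (C : ℝ → ℝ → ℝ → ℝ)
    (hC : ∀ u₁ u₂ u₃ : ℝ,
      C u₁ u₂ u₃ = u₁ * u₂ * u₃ * (1 + lam * (1 - u₁) * (1 - u₂) * (1 - u₃))) :
    ∀ u ∈ Icc (0:ℝ) 1, ∀ v ∈ Icc (0:ℝ) 1, ∀ w ∈ Icc (0:ℝ) 1,
    ∀ u' ∈ Icc (0:ℝ) 1, ∀ v' ∈ Icc (0:ℝ) 1, ∀ w' ∈ Icc (0:ℝ) 1,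
      u ≤ u' → v ≤ v' → w ≤ w' →
      (v * w - C u v w) * (v' * w' - C u' v' w') ≤
        (v * w - C u' v w) * (v' * w' - C u v' w') := by
  rintro u ⟨-, hu1⟩ v ⟨hv0, hv1⟩ w ⟨hw0, -⟩ u' ⟨-, hu'1⟩ v' ⟨hv'0, -⟩ w' ⟨hw'0, hw'1⟩
    huu hvv hww
  have ha : (1 - v') * (1 - w') ≤ (1 - v) * (1 - w) :=
    mul_le_mul (by linarith) (by linarith) (by linarith) (by linarith)
  have hK : 0 ≤ v * w * (1 - u) * (v' * w' * (1 - u')) :=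
    mul_nonneg (mul_nonneg (mul_nonneg hv0 hw0) (by linarith))
      (mul_nonneg (mul_nonneg hv'0 hw'0) (by linarith))
  simp only [hC, fgm3_gap_eq]
  calc _ = v * w * (1 - u) * (v' * w' * (1 - u')) *
          ((1 - lam * u * ((1 - v) * (1 - w))) * (1 - lam * u' * ((1 - v') * (1 - w')))) := by
        ring
    _ ≤ v * w * (1 - u) * (v' * w' * (1 - u')) *
          ((1 - lam * u' * ((1 - v) * (1 - w))) * (1 - lam * u * ((1 - v') * (1 - w')))) :=
        mul_le_mul_of_nonneg_left (one_sub_mul_mul_rearrangement hlam.2 huu ha) hK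
    _ = _ := by ring
end
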